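/- arXiv:2002.07595 — 5 statements merged into one kernel-verified Lean document; each statement's English description precedes it below -/
import Mathlib

section
/- Let G > 0 and let f : ℝ → ℝ be convex and continuous on [0,G]. Then for every price p, the function q ↦ inf D(q) tends to sup D(p) as q tends to p from the right; that is, max g^d(p) = lim_{ε→0⁺} min g^d(p+ε). -/
open Filter Topology

/-- The demand correspondence: maximizers of the profit `p·z − f z` over `[0, G]`. -/
def demandSet (f : ℝ → ℝ) (G p : ℝ) : Set ℝ :=
  {z ∈ Set.Icc (0 : ℝ) G | ∀ w ∈ Set.Icc (0 : ℝ) G, p * z - f z ≥ p * w - f w}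

lemma demandSet_subset (f : ℝ → ℝ) (G p : ℝ) : demandSet f G p ⊆ Set.Icc 0 G :=
  fun _ h => h.1

lemma demandSet_nonempty (f : ℝ → ℝ) (G : ℝ) (hG : 0 < G)
    (hcont : ContinuousOn f (Set.Icc (0:ℝ) G)) (p : ℝ) :
    (demandSet f G p).Nonempty := by
  obtain ⟨z, hz, hmax⟩ := isCompact_Icc.exists_isMaxOn (Set.nonempty_Icc.2 hG.le)
    (((continuousOn_const.mul continuousOn_id).sub hcont) :
      ContinuousOn (fun z => p * z - f z) _)
  exact ⟨z, hz, fun w hw => hmax hw⟩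

lemma demandSet_isClosed (f : ℝ → ℝ) (G : ℝ) (hG : 0 ≤ G)
    (hcont : ContinuousOn f (Set.Icc (0:ℝ) G)) (p : ℝ) :
    IsClosed (demandSet f G p) := by
  have heq : demandSet f G p =
      ⋂ w ∈ Set.Icc (0:ℝ) G,
        (Set.Icc (0:ℝ) G ∩ (fun z => p * z - f z) ⁻¹' Set.Ici (p * w - f w)) := by
    ext z
    simp only [demandSet, Set.mem_setOf_eq, Set.mem_iInter, Set.mem_inter_iff,
      Set.mem_preimage, Set.mem_Ici]
    constructor
    · rintro ⟨hz, h⟩ w hw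
      exact ⟨hz, h w hw⟩
    · intro h
      have h0 := h 0 (Set.left_mem_Icc.2 hG)
      exact ⟨h0.1, fun w hw => (h w hw).2⟩
  rw [heq]
  exact isClosed_biInter fun w _ =>
    ((continuousOn_const.mul continuousOn_id).sub hcont).preimage_isClosed_of_isClosed
      isClosed_Icc isClosed_Ici

/-- `max g^d(p) = lim_{ε→0⁺} min g^d(p+ε)`. -/
theorem inf_demandSet_tendsto_right (f : ℝ → ℝ) (G : ℝ) (hG : 0 < G)
    (hconv : ConvexOn ℝ (Set.Icc (0 : ℝ) G) f)
    (hcont : ContinuousOn f (Set.Icc (0 : ℝ) G)) (p : ℝ) :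
    Tendsto (fun q => sInf (demandSet f G q)) (𝓝[>] p) (𝓝 (sSup (demandSet f G p))) := by
  set D := demandSet f G with hD
  have hne : ∀ q, (D q).Nonempty := demandSet_nonempty f G hG hcont
  have hcl : ∀ q, IsClosed (D q) := demandSet_isClosed f G hG.le hcont
  have hbdd : ∀ q, BddBelow (D q) := fun q => bddBelow_Icc.mono (demandSet_subset f G q)
  have hbddA : ∀ q, BddAbove (D q) := fun q => bddAbove_Icc.mono (demandSet_subset f G q)
  have hInf : ∀ q, sInf (D q) ∈ D q := fun q => (hcl q).csInf_mem (hne q) (hbdd q)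
  set s := sSup (D p) with hs_def
  have hsD : s ∈ D p := (hcl p).csSup_mem (hne p) (hbddA p)
  have hsIcc : s ∈ Set.Icc (0:ℝ) G := hsD.1
  have hlow : ∀ q, p < q → ∀ z ∈ D q, s ≤ z := by
    intro q hq z hz
    have h1 := hsD.2 z hz.1
    have h2 := hz.2 s hsIcc
    nlinarith [h1, h2]
  rw [Metric.tendsto_nhdsWithin_nhds]
  intro ε hε
  by_cases hcase : G < s + ε/2
  · refine ⟨1, one_pos, fun q hq _ => ?_⟩
    have hq' : p < q := hq
    have h1 : s ≤ sInf (D q) := hlow q hq' _ (hInf q)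
    have h2 : sInf (D q) ≤ G := (demandSet_subset f G q (hInf q)).2
    rw [Real.dist_eq, abs_of_nonneg (by linarith)]
    linarith
  push_neg at hcase
  have hKsub : Set.Icc (s + ε/2) G ⊆ Set.Icc (0:ℝ) G :=
    Set.Icc_subset_Icc (by linarith [hsIcc.1]) le_rfl
  have hpos : ∀ w ∈ Set.Icc (s + ε/2) G, 0 < (p*s - f s) - (p*w - f w) := by
    intro w hw
    have hwI := hKsub hw
    have hle := hsD.2 w hwI
    rcases lt_or_eq_of_le hle with h | h
    · linarith
    · exfalso
      have hwD : w ∈ D p := ⟨hwI, fun u hu => by have := hsD.2 u hu; linarith⟩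
      have : w ≤ s := le_csSup (hbddA p) hwD
      linarith [hw.1]
  obtain ⟨w0, hw0, hmin⟩ := isCompact_Icc.exists_isMinOn
    (Set.nonempty_Icc.2 hcase)
    ((continuousOn_const.sub ((continuousOn_const.mul continuousOn_id).sub
      (hcont.mono hKsub))) :
      ContinuousOn (fun w => (p*s - f s) - (p*w - f w)) _)
  set η := (p*s - f s) - (p*w0 - f w0) with hη_def
  have hη : 0 < η := hpos w0 hw0
  refine ⟨η / G, div_pos hη hG, fun q hq hd => ?_⟩
  have hpq : p < q := hq
  have hq' : q - p < η / G := by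
    rw [Real.dist_eq] at hd
    have := abs_lt.1 hd
    linarith [this.2]
  have hnot : sInf (D q) ∉ Set.Icc (s + ε/2) G := by
    intro hK
    set z := sInf (D q) with hz_def
    have hz := hInf q
    have h1 : q*z - f z ≥ q*s - f s := hz.2 s hsIcc
    have h2 : η ≤ (p*s - f s) - (p*z - f z) := hmin hK
    have h3 : s < z := lt_of_lt_of_le (by linarith) hK.1
    have h4 : z ≤ G := hK.2
    have h5 : z - s ≤ G := by linarith [hsIcc.1]
    have h6 : (q - p) * (z - s) < η := by
      have hA : (q - p) * (z - s) ≤ (q - p) * G :=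
        mul_le_mul_of_nonneg_left h5 (by linarith)
      have hB : (q - p) * G < (η / G) * G :=
        mul_lt_mul_of_pos_right hq' hG
      have hC : (η / G) * G = η := div_mul_cancel₀ η hG.ne'
      linarith
    nlinarith [h1, h2, h6]
  have h1 : s ≤ sInf (D q) := hlow q hpq _ (hInf q)
  have h2 : sInf (D q) ≤ G := (demandSet_subset f G q (hInf q)).2
  have h3 : sInf (D q) < s + ε/2 := by
    by_contra h
    push_neg at h
    exact hnot ⟨h, h2⟩
  rw [Real.dist_eq, abs_of_nonneg (by linarith)]
  linarith
end

section
/- Let G > 0 and let f : ℝ → ℝ be convex and continuous on [0,G]. Then for every price p, the function q ↦ sup D(q) tends to inf D(p) as q tends to p from the left; that is, min g^d(p) = lim_{ε→0⁺} max g^d(p−ε). -/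
open Filter Topology

/-!
For `q < p`, adding the optimality inequalities of `z ∈ D(q)` against `z' ∈ D(p)` and vice versa
gives `(p - q) (z' - z) ≥ 0`, so every demand at `q` lies below every demand at `p`. Hence
`q ↦ sup D(q)` is monotone, has a left limit `L ≤ inf D(p)` at `p`, and passing to the limit in
the optimality inequalities (continuity of `f`) shows `L ∈ D(p)`, so `L = inf D(p)`.
-/

namespace demandSet

variable {f : ℝ → ℝ} {G : ℝ}

lemma le_of_mem_of_mem_of_lt {p q z z' : ℝ} (hqp : q < p) (hz : z ∈ demandSet f G q)
    (hz' : z' ∈ demandSet f G p) : z ≤ z' := by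
  have h₁ := hz.2 z' hz'.1
  have h₂ := hz'.2 z hz.1
  nlinarith

lemma mem_of_tendsto (hcont : ContinuousOn f (Set.Icc (0 : ℝ) G)) {ι : Type*} {l : Filter ι}
    [l.NeBot] {q z : ι → ℝ} {p z₀ : ℝ} (hq : Tendsto q l (𝓝 p)) (hz : Tendsto z l (𝓝 z₀))
    (hmem : ∀ᶠ i in l, z i ∈ demandSet f G (q i)) : z₀ ∈ demandSet f G p := by
  have hIcc : ∀ᶠ i in l, z i ∈ Set.Icc (0 : ℝ) G := hmem.mono fun _ hi => hi.1
  have hz₀ : z₀ ∈ Set.Icc (0 : ℝ) G := isClosed_Icc.mem_of_tendsto hz hIcc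
  have hfz : Tendsto (fun i => f (z i)) l (𝓝 (f z₀)) :=
    (hcont z₀ hz₀).tendsto.comp (tendsto_nhdsWithin_iff.2 ⟨hz, hIcc⟩)
  exact ⟨hz₀, fun w hw => le_of_tendsto_of_tendsto ((hq.mul_const w).sub_const (f w))
    ((hq.mul hz).sub hfz) (hmem.mono fun _ hi => hi.2 w hw)⟩

lemma isClosed (hcont : ContinuousOn f (Set.Icc (0 : ℝ) G)) (p : ℝ) :
    IsClosed (demandSet f G p) := by
  refine isClosed_of_closure_subset fun z hz => ?_
  have : (𝓝 z ⊓ 𝓟 (demandSet f G p)).NeBot := mem_closure_iff_clusterPt.1 hz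
  exact mem_of_tendsto (l := 𝓝 z ⊓ 𝓟 (demandSet f G p)) hcont tendsto_const_nhds
    (tendsto_id.mono_left inf_le_left) (mem_inf_of_right (mem_principal_self _))

lemma isCompact (hcont : ContinuousOn f (Set.Icc (0 : ℝ) G)) (p : ℝ) :
    IsCompact (demandSet f G p) :=
  isCompact_Icc.of_isClosed_subset (isClosed hcont p) fun _ hz => hz.1

lemma nonempty (hG : 0 ≤ G) (hcont : ContinuousOn f (Set.Icc (0 : ℝ) G)) (p : ℝ) :
    (demandSet f G p).Nonempty := by
  obtain ⟨z, hz, hmax⟩ := isCompact_Icc.exists_isMaxOn (Set.nonempty_Icc.2 hG)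
    ((continuousOn_const.mul continuousOn_id).sub hcont)
  exact ⟨z, hz, fun w hw => hmax hw⟩

lemma sSup_mem (hG : 0 ≤ G) (hcont : ContinuousOn f (Set.Icc (0 : ℝ) G)) (p : ℝ) :
    sSup (demandSet f G p) ∈ demandSet f G p :=
  (isCompact hcont p).sSup_mem (nonempty hG hcont p)

lemma sInf_mem (hG : 0 ≤ G) (hcont : ContinuousOn f (Set.Icc (0 : ℝ) G)) (p : ℝ) :
    sInf (demandSet f G p) ∈ demandSet f G p :=
  (isCompact hcont p).sInf_mem (nonempty hG hcont p)

lemma sInf_le {z p : ℝ} (hz : z ∈ demandSet f G p) : sInf (demandSet f G p) ≤ z :=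
  csInf_le ⟨0, fun _ hx => hx.1.1⟩ hz

lemma sSup_le_sInf_of_lt (hG : 0 ≤ G) (hcont : ContinuousOn f (Set.Icc (0 : ℝ) G)) {p q : ℝ}
    (hqp : q < p) : sSup (demandSet f G q) ≤ sInf (demandSet f G p) :=
  le_of_mem_of_mem_of_lt hqp (sSup_mem hG hcont q) (sInf_mem hG hcont p)

lemma monotone_sSup (hG : 0 ≤ G) (hcont : ContinuousOn f (Set.Icc (0 : ℝ) G)) :
    Monotone fun p => sSup (demandSet f G p) := by
  intro q p hqp
  rcases hqp.lt_or_eq with hlt | rfl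
  · exact (sSup_le_sInf_of_lt hG hcont hlt).trans
      (csInf_le_csSup (nonempty hG hcont p) (isCompact hcont p).bddBelow
        (isCompact hcont p).bddAbove)
  · exact le_rfl

end demandSet

theorem sup_demandSet_tendsto_left_general (f : ℝ → ℝ) (G : ℝ) (hG : 0 < G)
    (hcont : ContinuousOn f (Set.Icc (0 : ℝ) G)) (p : ℝ) :
    Tendsto (fun q => sSup (demandSet f G q)) (𝓝[<] p) (𝓝 (sInf (demandSet f G p))) := by
  have hlim := (demandSet.monotone_sSup hG.le hcont).tendsto_nhdsLT p
  set L := sSup ((fun q => sSup (demandSet f G q)) '' Set.Iio p)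
  have hL_le : L ≤ sInf (demandSet f G p) := le_of_tendsto hlim
    (eventually_nhdsWithin_of_forall fun _ hq => demandSet.sSup_le_sInf_of_lt hG.le hcont hq)
  have hL_mem : L ∈ demandSet f G p := demandSet.mem_of_tendsto hcont
    (tendsto_nhdsWithin_of_tendsto_nhds tendsto_id) hlim
    (Eventually.of_forall (demandSet.sSup_mem hG.le hcont))
  rwa [le_antisymm hL_le (demandSet.sInf_le hL_mem)] at hlim

/-- `min g^d(p) = lim_{ε→0⁺} max g^d(p−ε)`. -/
theorem sup_demandSet_tendsto_left (f : ℝ → ℝ) (G : ℝ) (hG : 0 < G)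
    (hconv : ConvexOn ℝ (Set.Icc (0 : ℝ) G) f)
    (hcont : ContinuousOn f (Set.Icc (0 : ℝ) G)) (p : ℝ) :
    Tendsto (fun q => sSup (demandSet f G q)) (𝓝[<] p) (𝓝 (sInf (demandSet f G p))) :=
  sup_demandSet_tendsto_left_general f G hG hcont p
end

section
/- (Fact 1: existence of a supporting price.) Let G > 0, let n ≥ 1, and for each i ∈ {1,…,n} let fᵢ : ℝ → ℝ be convex on [0,G] and Lipschitz on [0,G]. Then for every demand level y ∈ [0, n·G], the set price(y) is nonempty: there exist a price p and outputs z₁,…,zₙ with zᵢ ∈ Dᵢ(p) for each i and ∑ᵢ zᵢ = y. -/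
/-- Fact 1: for every demand level `y ∈ [0, n·G]` there is a supporting
price `p` and outputs `zᵢ ∈ Dᵢ(p)` summing to `y`. -/
theorem supporting_price_exists (G : ℝ) (hG : 0 < G) (n : ℕ) (hn : 1 ≤ n)
    (f : Fin n → ℝ → ℝ)
    (hconv : ∀ i, ConvexOn ℝ (Set.Icc (0 : ℝ) G) (f i))
    (hlip : ∀ i, ∃ K : NNReal, LipschitzOnWith K (f i) (Set.Icc (0 : ℝ) G))
    (y : ℝ) (hy : y ∈ Set.Icc (0 : ℝ) (n * G)) :
    ∃ (p : ℝ) (z : Fin n → ℝ), (∀ i, z i ∈ demandSet (f i) G p) ∧ ∑ i, z i = y := by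
  classical
  obtain ⟨hy0, hy1⟩ := hy
  choose K hK using hlip
  set Km : NNReal := Finset.univ.sup K with hKm
  have hKlip : ∀ i, LipschitzOnWith Km (f i) (Set.Icc (0 : ℝ) G) := fun i x hx y hy =>
    le_trans (hK i hx hy) (mul_le_mul_left
      (ENNReal.coe_le_coe.2 (Finset.le_sup (Finset.mem_univ i))) _)
  have h0G : (0 : ℝ) ∈ Set.Icc (0 : ℝ) G := ⟨le_refl 0, hG.le⟩
  have hGG : (G : ℝ) ∈ Set.Icc (0 : ℝ) G := ⟨hG.le, le_refl G⟩
  -- endpoint case y = 0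
  rcases eq_or_lt_of_le hy0 with hy0' | hy0'
  · refine ⟨-(Km : ℝ), fun _ => 0, fun i => ⟨h0G, fun w hw => ?_⟩, by simp [← hy0']⟩
    have hd := (hKlip i).dist_le_mul w hw 0 h0G
    rw [Real.dist_eq, Real.dist_eq, sub_zero] at hd
    have habs : |f i w - f i 0| ≤ (Km : ℝ) * w := by
      rwa [abs_of_nonneg hw.1] at hd
    have := abs_le.1 habs
    show -(Km : ℝ) * (0 : ℝ) - f i 0 ≥ -(Km : ℝ) * w - f i w
    nlinarith [this.1, this.2]
  rcases eq_or_lt_of_le hy1 with hy1' | hy1'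
  · -- endpoint case y = n*G
    refine ⟨(Km : ℝ), fun _ => G, fun i => ⟨hGG, fun w hw => ?_⟩, by
      simp [Finset.sum_const, hy1']⟩
    have hd := (hKlip i).dist_le_mul w hw G hGG
    rw [Real.dist_eq, Real.dist_eq] at hd
    have habs : |f i w - f i G| ≤ (Km : ℝ) * (G - w) := by
      rwa [abs_of_nonpos (by linarith [hw.2] : w - G ≤ 0), neg_sub] at hd
    have := abs_le.1 habs
    show (Km : ℝ) * G - f i G ≥ (Km : ℝ) * w - f i w
    nlinarith [this.1, this.2]
  -- main case 0 < y < n*G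
  set Feas : ℝ → Set (Fin n → ℝ) :=
    fun s => {z | (∀ i, z i ∈ Set.Icc (0 : ℝ) G) ∧ ∑ i, z i = s} with hFeas
  set Sfun : (Fin n → ℝ) → ℝ := fun z => ∑ i, f i (z i) with hSfun
  set F : ℝ → ℝ := fun s => sInf (Sfun '' Feas s) with hF
  -- membership in Feas forces s ∈ [0, n*G]
  have hFeas_range : ∀ s, ∀ z ∈ Feas s, s ∈ Set.Icc (0 : ℝ) (n * G) := by
    intro s z hz
    obtain ⟨hz1, hz2⟩ := hz
    constructor
    · rw [← hz2]; exact Finset.sum_nonneg fun i _ => (hz1 i).1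
    · rw [← hz2]
      calc ∑ i, z i ≤ ∑ _i : Fin n, G := Finset.sum_le_sum fun i _ => (hz1 i).2
        _ = n * G := by simp [Finset.sum_const, mul_comm]
  -- Feas s is compact
  have hFeas_compact : ∀ s, IsCompact (Feas s) := by
    intro s
    have heq : Feas s =
        (Set.Icc (0 : Fin n → ℝ) (fun _ => G)) ∩ ((fun z : Fin n → ℝ => ∑ i, z i) ⁻¹' {s}) := by
      ext z
      simp only [hFeas, Set.mem_setOf_eq, Set.mem_inter_iff, Set.mem_Icc, Set.mem_preimage,
        Set.mem_singleton_iff, Pi.le_def]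
      constructor
      · rintro ⟨h1, h2⟩; exact ⟨⟨fun i => (h1 i).1, fun i => (h1 i).2⟩, h2⟩
      · rintro ⟨⟨h1, h2⟩, h3⟩; exact ⟨fun i => ⟨h1 i, h2 i⟩, h3⟩
    have hcont : Continuous (fun z : Fin n → ℝ => ∑ i, z i) :=
      continuous_finset_sum _ fun i _ => continuous_apply i
    rw [heq]
    exact isCompact_Icc.inter_right (isClosed_singleton.preimage hcont)
  -- Sfun is continuous on Feas s
  have hScont : ∀ s, ContinuousOn Sfun (Feas s) := by
    intro s
    apply continuousOn_finset_sum
    intro i _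
    exact ((hKlip i).continuousOn).comp (continuous_apply i).continuousOn fun z hz => hz.1 i
  -- Feas s is nonempty for s ∈ [0, n*G]
  have hFeas_ne : ∀ s ∈ Set.Icc (0 : ℝ) (n * G), (Feas s).Nonempty := by
    intro s hs
    have hnpos : (0 : ℝ) < n := by exact_mod_cast Nat.pos_of_ne_zero (by omega)
    refine ⟨fun _ => s / n, ⟨fun i => ⟨div_nonneg hs.1 hnpos.le, ?_⟩, ?_⟩⟩
    · rw [div_le_iff₀ hnpos]; linarith [hs.2]
    · simp [Finset.sum_const]
      field_simp
  -- minimizers exist and realize F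
  have hmin : ∀ s ∈ Set.Icc (0 : ℝ) (n * G),
      ∃ z ∈ Feas s, Sfun z = F s ∧ ∀ z' ∈ Feas s, Sfun z ≤ Sfun z' := by
    intro s hs
    obtain ⟨z, hz, hzmin⟩ := (hFeas_compact s).exists_isMinOn (hFeas_ne s hs) (hScont s)
    have hmin' : ∀ z' ∈ Feas s, Sfun z ≤ Sfun z' := fun z' hz' => hzmin hz'
    refine ⟨z, hz, le_antisymm ?_ ?_, hmin'⟩
    · apply le_csInf (Set.Nonempty.image _ ⟨z, hz⟩)
      rintro b ⟨z', hz', rfl⟩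
      exact hmin' z' hz'
    · exact csInf_le ⟨Sfun z, by rintro b ⟨z', hz', rfl⟩; exact hmin' z' hz'⟩ ⟨z, hz, rfl⟩
  have hFle : ∀ s, ∀ z ∈ Feas s, F s ≤ Sfun z := by
    intro s z hz
    obtain ⟨z0, hz0, hz0F, hz0min⟩ := hmin s (hFeas_range s z hz)
    rw [← hz0F]; exact hz0min z hz
  -- convexity of F on [0, n*G]
  have hFconv : ConvexOn ℝ (Set.Icc (0 : ℝ) (n * G)) F := by
    refine ⟨convex_Icc _ _, ?_⟩
    intro s1 hs1 s2 hs2 a b ha hb hab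
    obtain ⟨z1, hz1, hz1F, _⟩ := hmin s1 hs1
    obtain ⟨z2, hz2, hz2F, _⟩ := hmin s2 hs2
    have hzm : (fun i => a * z1 i + b * z2 i) ∈ Feas (a • s1 + b • s2) := by
      constructor
      · intro i
        exact (convex_Icc (0 : ℝ) G) (hz1.1 i) (hz2.1 i) ha hb hab
      · simp only [smul_eq_mul, Finset.sum_add_distrib, ← Finset.mul_sum, hz1.2, hz2.2]
    calc F (a • s1 + b • s2) ≤ Sfun (fun i => a * z1 i + b * z2 i) := hFle _ _ hzm
      _ ≤ a * Sfun z1 + b * Sfun z2 := by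
          simp only [hSfun, Finset.mul_sum, ← Finset.sum_add_distrib]
          apply Finset.sum_le_sum
          intro i _
          have := (hconv i).2 (hz1.1 i) (hz2.1 i) ha hb hab
          simpa [smul_eq_mul] using this
      _ = a • F s1 + b • F s2 := by rw [hz1F, hz2F]; simp [smul_eq_mul]
  -- the supporting price: sup of left slopes of F at y
  set Slopes : Set ℝ := (fun w => (F y - F w) / (y - w)) '' Set.Ico 0 y with hSlopes
  have hSlopes_ne : Slopes.Nonempty := ⟨_, ⟨0, ⟨le_refl 0, hy0'⟩, rfl⟩⟩
  have hyIcc : y ∈ Set.Icc (0 : ℝ) (n * G) := ⟨hy0, hy1⟩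
  have hslope_le : ∀ q ∈ Slopes, ∀ s ∈ Set.Icc (0 : ℝ) (n * G), y < s →
      q ≤ (F s - F y) / (s - y) := by
    rintro q ⟨w, hw, rfl⟩ s hs hys
    exact hFconv.slope_mono_adjacent ⟨hw.1, le_trans hw.2.le hy1⟩ hs hw.2 hys
  have hSlopes_bdd : BddAbove Slopes :=
    ⟨(F (n * G) - F y) / (n * G - y), fun q hq =>
      hslope_le q hq (n * G) ⟨by positivity, le_refl _⟩ hy1'⟩
  set p : ℝ := sSup Slopes with hp
  -- subgradient inequality
  have hgrad : ∀ s ∈ Set.Icc (0 : ℝ) (n * G), F y + p * (s - y) ≤ F s := by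
    intro s hs
    rcases lt_trichotomy s y with h | h | h
    · have hmem : (F y - F s) / (y - s) ∈ Slopes := ⟨s, ⟨hs.1, h⟩, rfl⟩
      have := le_csSup hSlopes_bdd hmem
      have hpos : 0 < y - s := by linarith
      rw [div_le_iff₀ hpos] at this
      nlinarith
    · simp [h]
    · have := csSup_le hSlopes_ne fun q hq => hslope_le q hq s hs h
      have hpos : 0 < s - y := by linarith
      rw [le_div_iff₀ hpos] at this
      linarith
  -- the minimizer at y
  obtain ⟨z, hzF, hzFval, hzmin⟩ := hmin y hyIcc
  refine ⟨p, z, fun i => ⟨hzF.1 i, fun w hw => ?_⟩, hzF.2⟩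
  -- modified allocation
  set z' : Fin n → ℝ := Function.update z i w with hz'
  have hz'coord : ∀ j, z' j ∈ Set.Icc (0 : ℝ) G := by
    intro j
    rcases eq_or_ne j i with rfl | hj
    · simpa [hz'] using hw
    · simpa [hz', Function.update_of_ne hj] using hzF.1 j
  have hz'sum : ∑ j, z' j = y - z i + w := by
    have : ∑ j, z' j = w + ∑ j ∈ Finset.univ.erase i, z j := by
      rw [hz', Finset.sum_update_of_mem (Finset.mem_univ i)]
      simp [Finset.sum_erase_eq_sub (Finset.mem_univ i)]
    rw [this, Finset.sum_erase_eq_sub (Finset.mem_univ i), hzF.2]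
    ring
  have hz'feas : z' ∈ Feas (y - z i + w) := ⟨hz'coord, hz'sum⟩
  have hs'Icc : y - z i + w ∈ Set.Icc (0 : ℝ) (n * G) := hFeas_range _ z' hz'feas
  have hSz' : Sfun z' = Sfun z - f i (z i) + f i w := by
    have hfun : (fun j => f j (z' j)) = Function.update (fun j => f j (z j)) i (f i w) := by
      funext j
      rcases eq_or_ne j i with rfl | hj
      · simp [hz']
      · simp [hz', Function.update_of_ne hj]
    rw [hSfun]
    simp only [hfun]
    rw [Finset.sum_update_of_mem (Finset.mem_univ i), Finset.sdiff_singleton_eq_erase,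
      Finset.sum_erase_eq_sub (Finset.mem_univ i)]
    ring
  have h1 : F (y - z i + w) ≤ Sfun z - f i (z i) + f i w := hSz' ▸ hFle _ z' hz'feas
  have h2 := hgrad _ hs'Icc
  rw [hzFval] at h1
  -- h2 : F y + p * ((y - z i + w) - y) ≤ F (y - z i + w)
  have : F y + p * (w - z i) ≤ F y - f i (z i) + f i w := by
    calc F y + p * (w - z i) = F y + p * ((y - z i + w) - y) := by ring_nf
      _ ≤ F (y - z i + w) := h2
      _ ≤ F y - f i (z i) + f i w := h1
  linarith
end

section
/- (Convex hull of a startup-plus-linear cost.) Let G > 0, c ≥ 0, v ∈ ℝ, and define f : ℝ → ℝ by f(0) = 0 and f(z) = c + v·z for z ≠ 0. Then: (i) for all z ∈ [0,G], (v + c/G)·z ≤ f(z); and (ii) for every function h : ℝ → ℝ that is convex on [0,G] and satisfies h(z) ≤ f(z) for all z ∈ [0,G], one has h(z) ≤ (v + c/G)·z for all z ∈ [0,G]. Hence z ↦ (v + c/G)·z is the convex envelope of f on [0,G]. -/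
open Set

theorem ConvexOn.le_affine_of_le_at_endpoints {a b m k : ℝ} {h : ℝ → ℝ}
    (hh : ConvexOn ℝ (Icc a b) h) (ha : h a ≤ m * a + k) (hb : h b ≤ m * b + k) :
    ∀ z ∈ Icc a b, h z ≤ m * z + k := by
  intro z hz
  have hab : a ≤ b := hz.1.trans hz.2
  have hconv : ConvexOn ℝ (Icc a b) fun x => h x - (m * x + k) :=
    hh.sub (((LinearMap.mul ℝ ℝ m).concaveOn (convex_Icc a b)).add_const k)
  have := hconv.le_on_segment (left_mem_Icc.2 hab) (right_mem_Icc.2 hab)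
    (by rwa [segment_eq_Icc hab])
  linarith [max_le (sub_nonpos.2 ha) (sub_nonpos.2 hb)]

/-- the convex envelope on `[0, G]` of the startup-plus-linear cost
`f(0) = 0`, `f(z) = c + v·z` for `z ≠ 0` is the linear function `z ↦ (v + c/G)·z`. -/
theorem convex_envelope_startup_linear (G c v : ℝ) (hG : 0 < G) (hc : 0 ≤ c)
    (f : ℝ → ℝ) (hf0 : f 0 = 0) (hf : ∀ z : ℝ, z ≠ 0 → f z = c + v * z) :
    (∀ z ∈ Set.Icc (0 : ℝ) G, (v + c / G) * z ≤ f z) ∧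
    (∀ h : ℝ → ℝ, ConvexOn ℝ (Set.Icc (0 : ℝ) G) h →
      (∀ z ∈ Set.Icc (0 : ℝ) G, h z ≤ f z) →
      ∀ z ∈ Set.Icc (0 : ℝ) G, h z ≤ (v + c / G) * z) := by
  have hfG : f G = (v + c / G) * G := by
    rw [hf G hG.ne', add_mul, div_mul_cancel₀ c hG.ne']; ring
  constructor
  · rintro z ⟨hz0, hzG⟩
    rcases eq_or_ne z 0 with rfl | hz
    · simp [hf0]
    · have hstartup : c / G * z ≤ c := calc
        c / G * z ≤ c / G * G := by gcongr
        _ = c := div_mul_cancel₀ c hG.ne'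
      rw [hf z hz]
      linarith
  · intro h hh hle z hz
    simpa using hh.le_affine_of_le_at_endpoints (m := v + c / G) (k := 0)
      (by simpa [hf0] using hle 0 (left_mem_Icc.2 hG.le))
      (by simpa [hfG] using hle G (right_mem_Icc.2 hG.le)) z hz
end

section
/- (Convex hull price formula.) Let G > 0, n ≥ 1, and let a : {1,…,n} → ℝ be non-decreasing (the sorted average costs aᵢ = cᵢ/G + vᵢ of the convexified generator costs f̄ᵢ(z) = aᵢ·z). Fix m ∈ {1,…,n} and let y ∈ [(m−1)·G, m·G]. Then the price p = aₘ supports y: there exist z₁,…,zₙ with ∑ᵢ zᵢ = y and each zᵢ a maximizer of z ↦ aₘ·z − aᵢ·z over [0,G]. In particular, p*(y) = (cᵢ/G + vᵢ)ₘ is a supporting (convex hull) price whenever y ∈ [(m−1)·G, m·G]. -/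
/-- Convex hull price formula: with non-decreasing sorted average costs
`aᵢ = cᵢ/G + vᵢ` (convexified costs `f̄ᵢ(z) = aᵢ·z`, indices `0,…,n−1`), for every
`m` and every demand `y ∈ [m·G, (m+1)·G]` the price `p = aₘ` supports `y`. -/
theorem convex_hull_price_formula (G : ℝ) (hG : 0 < G) (n : ℕ) (hn : 1 ≤ n)
    (a : Fin n → ℝ) (ha : Monotone a) (m : Fin n) (y : ℝ)
    (hy : y ∈ Set.Icc ((m : ℕ) * G) (((m : ℕ) + 1) * G)) :
    ∃ z : Fin n → ℝ, (∑ i, z i = y) ∧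
      ∀ i, z i ∈ Set.Icc (0 : ℝ) G ∧
        ∀ w ∈ Set.Icc (0 : ℝ) G, a m * z i - a i * z i ≥ a m * w - a i * w := by
  obtain ⟨hy1, hy2⟩ := hy
  refine ⟨fun i => if i < m then G else if i = m then y - (m : ℕ) * G else 0, ?_, ?_⟩
  · have hsplit : ∀ i : Fin n,
        (if i < m then G else if i = m then y - (m : ℕ) * G else 0)
        = (if i < m then G else 0) + (if i = m then y - (m : ℕ) * G else 0) := by
      intro i
      by_cases h1 : i < m
      · simp [h1, h1.ne]
      · simp [h1]
    rw [Finset.sum_congr rfl (fun i _ => hsplit i), Finset.sum_add_distrib]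
    have h1 : ∑ i : Fin n, (if i < m then G else (0:ℝ)) = (m : ℕ) * G := by
      rw [Finset.sum_ite, Finset.sum_const, Finset.sum_const, smul_zero, add_zero]
      have : Finset.filter (fun i => i < m) Finset.univ = Finset.Iio m := by
        ext x; simp
      rw [this, Fin.card_Iio, nsmul_eq_mul]
    have h2 : ∑ i : Fin n, (if i = m then y - (m : ℕ) * G else (0:ℝ))
        = y - (m : ℕ) * G := by
      simp [Finset.sum_ite_eq']
    rw [h1, h2]; ring
  · intro i
    by_cases h1 : i < m
    · have ham : a i ≤ a m := ha h1.le
      refine ⟨by simp [h1, le_of_lt hG], ?_⟩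
      intro w ⟨hw0, hwG⟩
      simp only [h1, if_pos]
      have : (a m - a i) * w ≤ (a m - a i) * G :=
        mul_le_mul_of_nonneg_left hwG (by linarith)
      nlinarith
    · by_cases h2 : i = m
      · subst h2
        simp only [if_neg h1, if_pos rfl]
        refine ⟨⟨by simp only [if_true]; linarith, by simp only [if_true]; nlinarith⟩, ?_⟩
        intro w hw
        simp
      · have hmi : m < i := by
          rcases lt_trichotomy i m with h | h | h
          · exact absurd h h1
          · exact absurd h h2
          · exact h
        have ham : a m ≤ a i := ha hmi.le
        refine ⟨by simp [h1, h2, le_of_lt hG], ?_⟩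
        intro w ⟨hw0, hwG⟩
        simp only [if_neg h1, if_neg h2]
        have : (a m - a i) * w ≤ 0 := mul_nonpos_of_nonpos_of_nonneg (by linarith) hw0
        nlinarith
end
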